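/- arXiv:2311.04023 — 2 statements merged into one kernel-verified Lean document; each statement's English description precedes it below -/
import Mathlib

section
/- For all constants c > 0 and c' > 0: limsup_{r→∞} P(L_0(r, c·r)) > 0 if and only if limsup_{r→∞} P(L_0(r, c'·r)) > 0. In words, the property that edges of length at least c·r with an endpoint in the ball of radius r about the origin occur with probability bounded away from 0 along a sequence of radii r → ∞ does not depend on the value of the constant c > 0. -/
/-!
Cover the unit ball by finitely many, say `N`, balls of radius `κ = c / c'`. Scaling by `r`,
`B(0, r)` is covered by `N` balls of radius `κ r`, so an edge of length `> c r = c' (κ r)` starting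
in `B(0, r)` starts in one of them. Translation invariance then gives
`P(L₀(r, c r)) ≤ N · P(L₀(κ r, c' (κ r)))`, and since `r ↦ κ r` maps `atTop` onto itself,
`limsup P(L₀(r, c r)) ≤ N · limsup P(L₀(r, c' r))`. Exchanging `c` and `c'` gives the equivalence.
-/

open Filter MeasureTheory Metric
open scoped Pointwise

section Covering

variable {V : Type*} [NormedAddCommGroup V] [NormedSpace ℝ V]

theorem ball_zero_subset_biUnion_ball_smul {s : Set V} {κ : ℝ}
    (hs : closedBall (0 : V) 1 ⊆ ⋃ x ∈ s, ball x κ) {r : ℝ} (hr : 0 < r) :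
    ball (0 : V) r ⊆ ⋃ x ∈ s, ball (r • x) (κ * r) := by
  have hcover : r • ball (0 : V) 1 ⊆ r • ⋃ x ∈ s, ball x κ :=
    Set.smul_set_mono (ball_subset_closedBall.trans hs)
  rw [smul_unitBall_of_pos hr, Set.smul_set_iUnion₂] at hcover
  simpa only [_root_.smul_ball hr.ne', Real.norm_of_nonneg hr.le, mul_comm r] using hcover

theorem exists_finset_ball_zero_subset_biUnion_ball_smul [ProperSpace V] {κ : ℝ} (hκ : 0 < κ) :
    ∃ s : Finset V, ∀ r, 0 < r → ball (0 : V) r ⊆ ⋃ x ∈ s, ball (r • x) (κ * r) := by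
  obtain ⟨s, -, hfin, hs⟩ := finite_cover_balls_of_compact (isCompact_closedBall (0 : V) 1) hκ
  exact ⟨hfin.toFinset, fun r hr =>
    ball_zero_subset_biUnion_ball_smul (by rwa [Set.Finite.coe_toFinset]) hr⟩

end Covering

section LongEdge

variable {Ω V : Type*} [SeminormedAddCommGroup V]

def longEdgeEvent (E : Ω → Set (V × V)) (x : V) (r t : ℝ) : Set Ω :=
  {ω | ∃ a b : V, (a, b) ∈ E ω ∧ a ∈ ball x r ∧ t < ‖b - a‖}

theorem longEdgeEvent_subset_biUnion (E : Ω → Set (V × V)) {ι : Type*} {s : Set ι} {y : ι → V}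
    {x : V} {r ρ : ℝ} (t : ℝ) (h : ball x r ⊆ ⋃ i ∈ s, ball (y i) ρ) :
    longEdgeEvent E x r t ⊆ ⋃ i ∈ s, longEdgeEvent E (y i) ρ t := by
  rintro ω ⟨a, b, hab, ha, hlong⟩
  obtain ⟨i, hi, hai⟩ := Set.mem_iUnion₂.1 (h ha)
  exact Set.mem_iUnion₂.2 ⟨i, hi, a, b, hab, hai, hlong⟩

theorem measure_longEdgeEvent_le_card_mul [MeasurableSpace Ω] (μ : Measure Ω)
    (E : Ω → Set (V × V)) {ι : Type*} {s : Finset ι} {y : ι → V} {x : V} {r ρ t : ℝ}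
    (hinv : ∀ z, μ (longEdgeEvent E z ρ t) = μ (longEdgeEvent E 0 ρ t))
    (h : ball x r ⊆ ⋃ i ∈ s, ball (y i) ρ) :
    μ (longEdgeEvent E x r t) ≤ s.card * μ (longEdgeEvent E 0 ρ t) :=
  calc μ (longEdgeEvent E x r t)
      ≤ ∑ i ∈ s, μ (longEdgeEvent E (y i) ρ t) :=
        (measure_mono (longEdgeEvent_subset_biUnion E t h)).trans (measure_biUnion_finset_le _ _)
    _ = s.card * μ (longEdgeEvent E 0 ρ t) := by
        simp only [hinv, Finset.sum_const, nsmul_eq_mul]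

end LongEdge

theorem Filter.limsup_comp_const_mul_atTop {α : Type*} [ConditionallyCompleteLattice α]
    (g : ℝ → α) {κ : ℝ} (hκ : 0 < κ) :
    limsup (fun r => g (κ * r)) atTop = limsup g atTop :=
  congrArg (limsup g) (OrderIso.mulLeft₀ κ hκ).map_atTop

theorem exists_limsup_measure_longEdgeEvent_le_mul {Ω V : Type*} [MeasurableSpace Ω]
    [NormedAddCommGroup V] [NormedSpace ℝ V] [ProperSpace V] (μ : Measure Ω)
    (E : Ω → Set (V × V))
    (hinv : ∀ x r t, 0 < r → 0 < t → μ (longEdgeEvent E x r t) = μ (longEdgeEvent E 0 r t))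
    {c c' : ℝ} (hc : 0 < c) (hc' : 0 < c') :
    ∃ N : ℕ, limsup (fun r => μ (longEdgeEvent E 0 r (c * r))) atTop ≤
      N * limsup (fun r => μ (longEdgeEvent E 0 r (c' * r))) atTop := by
  obtain ⟨κ, hκ, hκc⟩ : ∃ κ, 0 < κ ∧ c' * κ = c := ⟨c / c', div_pos hc hc', by field_simp⟩
  obtain ⟨s, hs⟩ := exists_finset_ball_zero_subset_biUnion_ball_smul (V := V) hκ
  refine ⟨s.card, ?_⟩
  have hbound : ∀ᶠ r in atTop, μ (longEdgeEvent E 0 r (c * r)) ≤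
      s.card * μ (longEdgeEvent E 0 (κ * r) (c' * (κ * r))) := by
    filter_upwards [eventually_gt_atTop 0] with r hr
    have hlength : c * r = c' * (κ * r) := by rw [← mul_assoc, hκc]
    rw [hlength]
    exact measure_longEdgeEvent_le_card_mul μ E
      (fun z => hinv z _ _ (mul_pos hκ hr) (mul_pos hc' (mul_pos hκ hr))) (hs r hr)
  calc limsup (fun r => μ (longEdgeEvent E 0 r (c * r))) atTop
      ≤ limsup (fun r => s.card * μ (longEdgeEvent E 0 (κ * r) (c' * (κ * r)))) atTop :=
        limsup_le_limsup hbound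
    _ = s.card * limsup (fun r => μ (longEdgeEvent E 0 r (c' * r))) atTop := by
        rw [ENNReal.limsup_const_mul_of_ne_top (ENNReal.natCast_ne_top _),
          limsup_comp_const_mul_atTop (fun r => μ (longEdgeEvent E 0 r (c' * r))) hκ]

theorem long_edge_property_independent_of_constant_general
    (d : ℕ)
    {Ω : Type*} [MeasurableSpace Ω] (μ : Measure Ω)
    (E : Ω → Set (EuclideanSpace ℝ (Fin d) × EuclideanSpace ℝ (Fin d)))
    (L : EuclideanSpace ℝ (Fin d) → ℝ → ℝ → Set Ω)
    (hLdef : ∀ x r t, L x r t =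
      {ω | ∃ a b : EuclideanSpace ℝ (Fin d),
        (a, b) ∈ E ω ∧ a ∈ Metric.ball x r ∧ t < ‖b - a‖})
    (hinv : ∀ x r t, 0 < r → 0 < t → μ (L x r t) = μ (L 0 r t))
    (c c' : ℝ) (hc : 0 < c) (hc' : 0 < c') :
    0 < limsup (fun r : ℝ => μ (L 0 r (c * r))) atTop ↔
      0 < limsup (fun r : ℝ => μ (L 0 r (c' * r))) atTop := by
  obtain rfl : L = longEdgeEvent E := funext fun x => funext fun r => funext (hLdef x r)
  obtain ⟨N, hN⟩ := exists_limsup_measure_longEdgeEvent_le_mul μ E hinv hc hc'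
  obtain ⟨N', hN'⟩ := exists_limsup_measure_longEdgeEvent_le_mul μ E hinv hc' hc
  simp only [pos_iff_ne_zero]
  refine not_congr ⟨fun h0 => ?_, fun h0 => ?_⟩
  · simpa [h0] using hN'
  · simpa [h0] using hN

/-- The long-edge property `H(λ, c)` — that edges of length at least `c·r` with an
endpoint in `B(0, r)` occur with probability bounded away from `0` along radii
`r → ∞` — does not depend on the constant `c > 0`. -/
theorem long_edge_property_independent_of_constant
    (d : ℕ) (hd : 1 ≤ d)
    {Ω : Type*} [MeasurableSpace Ω] (μ : Measure Ω) [IsProbabilityMeasure μ]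
    (E : Ω → Set (EuclideanSpace ℝ (Fin d) × EuclideanSpace ℝ (Fin d)))
    (L : EuclideanSpace ℝ (Fin d) → ℝ → ℝ → Set Ω)
    (hLdef : ∀ x r t, L x r t =
      {ω | ∃ a b : EuclideanSpace ℝ (Fin d),
        (a, b) ∈ E ω ∧ a ∈ Metric.ball x r ∧ t < ‖b - a‖})
    (hLmeas : ∀ x r t, 0 < r → 0 < t → MeasurableSet (L x r t))
    (hinv : ∀ x r t, 0 < r → 0 < t → μ (L x r t) = μ (L 0 r t))
    (c c' : ℝ) (hc : 0 < c) (hc' : 0 < c') :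
    0 < limsup (fun r : ℝ => μ (L 0 r (c * r))) atTop ↔
      0 < limsup (fun r : ℝ => μ (L 0 r (c' * r))) atTop :=
  long_edge_property_independent_of_constant_general d μ E L hLdef hinv c c' hc hc'
end

section
/- Let C > 0 and r₀ > 0 be reals and let f, g : ℝ → ℝ be functions such that: f(r) ≥ 0 for all r ≥ r₀; 0 ≤ g(r) ≤ 1/(4C) for all r ≥ r₀; g(r) → 0 as r → ∞; f(10·r) ≤ C·f(r)² + g(r) for all r ≥ r₀; and f(r) ≤ 1/(2C) for all r ∈ [r₀, 10·r₀]. Then f(r) → 0 as r → ∞. -/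
open Filter Topology

/-!
The recursion preserves the bound `f ≤ 1/(2C)` from one scale to the next, because
`C (1/(2C))² + 1/(4C) = 1/(2C)`; starting from `[r₀, 10 r₀]` it therefore holds on all of
`[r₀, ∞)`. Under that bound `C f² ≤ f/2`, so the recursion becomes linear,
`f(10r) ≤ f(r)/2 + g(r)`, and iterating it from a radius beyond which `g` is small makes
`f` eventually small.
-/

theorem scale_induction {P : ℝ → Prop} {a r₀ : ℝ} (ha : 1 < a) (hr₀ : 0 < r₀)
    (base : ∀ r, r₀ ≤ r → r ≤ a * r₀ → P r) (step : ∀ r, r₀ ≤ r → P r → P (a * r)) :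
    ∀ r, r₀ ≤ r → P r := by
  have ha₀ : 0 < a := one_pos.trans ha
  have up_to : ∀ n : ℕ, ∀ r, r₀ ≤ r → r ≤ a ^ n * r₀ → P r := by
    intro n
    induction n with
    | zero => exact fun r hr hrn => base r hr (by nlinarith)
    | succ n ih =>
      intro r hr hrn
      by_cases hsmall : r ≤ a * r₀
      · exact base r hr hsmall
      · have hdiv : r₀ ≤ r / a := by rw [le_div_iff₀ ha₀]; linarith
        have hdiv' : r / a ≤ a ^ n * r₀ := by
          rwa [div_le_iff₀ ha₀, mul_right_comm, ← pow_succ]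
        simpa [mul_div_cancel₀ r ha₀.ne'] using step _ hdiv (ih _ hdiv hdiv')
  intro r hr
  obtain ⟨n, hn⟩ := pow_unbounded_of_one_lt (r / r₀) ha
  exact up_to n r hr ((div_lt_iff₀ hr₀).1 hn).le

theorem le_pow_mul_add_of_le_mul_add {f : ℝ → ℝ} {a q c B s : ℝ} (ha : 1 ≤ a) (hs : 0 ≤ s)
    (hq : 0 ≤ q) (hB : ∀ r, s ≤ r → f r ≤ B)
    (hrec : ∀ r, s ≤ r → f (a * r) ≤ q * f r + (1 - q) * c) :
    ∀ n : ℕ, ∀ r, s ≤ r → f (a ^ n * r) ≤ q ^ n * (B - c) + c := by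
  intro n
  induction n with
  | zero => simpa using hB
  | succ n ih =>
    intro r hr
    have hscaled : s ≤ a ^ n * r :=
      hr.trans (le_mul_of_one_le_left (hs.trans hr) (one_le_pow₀ ha))
    calc f (a ^ (n + 1) * r) = f (a * (a ^ n * r)) := by ring_nf
      _ ≤ q * f (a ^ n * r) + (1 - q) * c := hrec _ hscaled
      _ ≤ q * (q ^ n * (B - c) + c) + (1 - q) * c := by gcongr; exact ih r hr
      _ = q ^ (n + 1) * (B - c) + c := by ring

theorem tendsto_zero_of_le_mul_add {f g : ℝ → ℝ} {a q B r₀ : ℝ} (ha : 1 ≤ a) (hq₀ : 0 ≤ q)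
    (hq₁ : q < 1) (hf₀ : ∀ r, r₀ ≤ r → 0 ≤ f r) (hB : ∀ r, r₀ ≤ r → f r ≤ B)
    (hrec : ∀ r, r₀ ≤ r → f (a * r) ≤ q * f r + g r) (hg : Tendsto g atTop (𝓝 0)) :
    Tendsto f atTop (𝓝 0) := by
  refine tendsto_order.2 ⟨fun b hb ↦ eventually_atTop.2 ⟨r₀, fun r hr ↦ hb.trans_le (hf₀ r hr)⟩,
    fun ε hε ↦ ?_⟩
  set c := ε / 2 with hc_def
  have hc : 0 < c := half_pos hε
  obtain ⟨s, hs⟩ := eventually_atTop.1 <|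
    (hg.eventually (ge_mem_nhds (mul_pos (sub_pos.2 hq₁) hc))).and
      (eventually_ge_atTop (max r₀ 0))
  have hsr₀ : r₀ ≤ s := (le_max_left _ _).trans (hs s le_rfl).2
  have hs₀ : 0 ≤ s := (le_max_right _ _).trans (hs s le_rfl).2
  have hiter := le_pow_mul_add_of_le_mul_add (c := c) ha hs₀ hq₀
    (fun r hr ↦ hB r (hsr₀.trans hr))
    (fun r hr ↦ (hrec r (hsr₀.trans hr)).trans (by linarith [(hs r hr).1]))
  obtain ⟨n, hn⟩ : ∃ n : ℕ, q ^ n * (B - c) < c := by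
    have := (tendsto_pow_atTop_nhds_zero_of_lt_one hq₀ hq₁).mul_const (B - c)
    rw [zero_mul] at this
    exact (this.eventually (gt_mem_nhds hc)).exists
  have han : 0 < a ^ n := pow_pos (one_pos.trans_le ha) n
  refine eventually_atTop.2 ⟨a ^ n * s, fun r hr ↦ ?_⟩
  have := hiter n (r / a ^ n) ((le_div_iff₀' han).2 hr)
  rw [mul_div_cancel₀ r han.ne'] at this
  linarith

theorem mul_sq_le_half {C x : ℝ} (hC : 0 < C) (hx₀ : 0 ≤ x) (hx : x ≤ 1 / (2 * C)) :
    C * x ^ 2 ≤ 1 / 2 * x := by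
  have hCx : C * x ≤ 1 / 2 := by
    calc C * x ≤ C * (1 / (2 * C)) := by gcongr
      _ = 1 / 2 := by field_simp
  nlinarith

/-- Full Gouéré-type renormalization lemma: the recursion `f(10r) ≤ C f(r)² + g(r)`
with error `g ≤ 1/(4C)` tending to `0`, initialized with `f ≤ 1/(2C)` on `[r₀, 10 r₀]`,
implies `f(r) → 0` as `r → ∞`. -/
theorem gouere_renormalization
    (C r₀ : ℝ) (hC : 0 < C) (hr₀ : 0 < r₀)
    (f g : ℝ → ℝ)
    (hf0 : ∀ r, r₀ ≤ r → 0 ≤ f r)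
    (hg : ∀ r, r₀ ≤ r → 0 ≤ g r ∧ g r ≤ 1 / (4 * C))
    (hgto : Tendsto g atTop (nhds 0))
    (hrec : ∀ r, r₀ ≤ r → f (10 * r) ≤ C * (f r) ^ 2 + g r)
    (hinit : ∀ r, r₀ ≤ r → r ≤ 10 * r₀ → f r ≤ 1 / (2 * C)) :
    Tendsto f atTop (nhds 0) := by
  have hquarter : 1 / 2 * (1 / (2 * C)) + 1 / (4 * C) = 1 / (2 * C) := by
    field_simp; ring
  have hbound : ∀ r, r₀ ≤ r → f r ≤ 1 / (2 * C) := by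
    refine scale_induction (by norm_num) hr₀ hinit fun r hr hfr ↦ ?_
    linarith [hrec r hr, (hg r hr).2, mul_sq_le_half hC (hf0 r hr) hfr]
  exact tendsto_zero_of_le_mul_add (a := 10) (q := 1 / 2) (by norm_num) (by norm_num)
    (by norm_num) hf0 hbound
    (fun r hr ↦ (hrec r hr).trans (by linarith [mul_sq_le_half hC (hf0 r hr) (hbound r hr)])) hgto
end
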